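/- arXiv:2008.09643 — 10 statements merged into one kernel-verified Lean document; each statement's English description precedes it below -/
import Mathlib

section
/- Let m ≥ 1, let X be a measurable space, let μ be a probability measure on X × Fin m, and let l : Fin m → X → ℝ be a family of measurable logit functions. Assume that for every temperature T > 0 the function (x, y) ↦ log( exp(l y x / T) / ∑_{j=1}^m exp(l j x / T) ) is μ-integrable. Then the expected log-likelihood L(T) = ∫ log( exp(l y x / T) / ∑_j exp(l j x / T) ) dμ(x,y) is a unimodal (quasiconcave) function of T on (0, ∞); that is, for all temperatures 0 < T₁ ≤ T₂ ≤ T₃ one has L(T₂) ≥ min(L(T₁), L(T₃)). -/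
/-!
In the inverse temperature `β = 1 / T` the log-likelihood of a label is
`β c_y - log ∑ⱼ exp (β cⱼ)`, a linear function minus a log-sum-exp, and log-sum-exp is convex
by Hölder's inequality. Hence the expected log-likelihood is concave in `β`, so quasiconcave, and
quasiconcavity survives the monotone reparametrisation `T = 1 / β`.
-/

open MeasureTheory Real Set

theorem Real.sum_rpow_mul_rpow_le {ι : Type*} (s : Finset ι) {u v : ι → ℝ}
    (hu : ∀ i ∈ s, 0 ≤ u i) (hv : ∀ i ∈ s, 0 ≤ v i)
    (hU : 0 < ∑ i ∈ s, u i) (hV : 0 < ∑ i ∈ s, v i)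
    {a b : ℝ} (ha : 0 ≤ a) (hb : 0 ≤ b) (hab : a + b = 1) :
    ∑ i ∈ s, u i ^ a * v i ^ b ≤ (∑ i ∈ s, u i) ^ a * (∑ i ∈ s, v i) ^ b := by
  set U := ∑ i ∈ s, u i
  set V := ∑ i ∈ s, v i
  have hC : 0 < U ^ a * V ^ b := by positivity
  -- weighted AM-GM on the normalised vectors `u / U` and `v / V`
  calc ∑ i ∈ s, u i ^ a * v i ^ b
        = ∑ i ∈ s, (u i / U) ^ a * (v i / V) ^ b * (U ^ a * V ^ b) := by
          refine Finset.sum_congr rfl fun i hi => ?_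
          rw [div_rpow (hu i hi) hU.le, div_rpow (hv i hi) hV.le]
          field_simp
    _ ≤ ∑ i ∈ s, (a * (u i / U) + b * (v i / V)) * (U ^ a * V ^ b) := by
          gcongr with i hi
          exact geom_mean_le_arith_mean2_weighted ha hb
            (div_nonneg (hu i hi) hU.le) (div_nonneg (hv i hi) hV.le) hab
    _ = U ^ a * V ^ b := by
          rw [← Finset.sum_mul, Finset.sum_add_distrib, ← Finset.mul_sum, ← Finset.mul_sum,
            ← Finset.sum_div, ← Finset.sum_div, div_self hU.ne', div_self hV.ne']
          simp [hab]

theorem convexOn_log_sum_exp_mul {ι : Type*} [Fintype ι] [Nonempty ι] (c : ι → ℝ) :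
    ConvexOn ℝ univ fun β => log (∑ j, exp (c j * β)) := by
  refine ⟨convex_univ, fun β₁ _ β₃ _ a b ha hb hab => ?_⟩
  have hS : ∀ β, 0 < ∑ j, exp (c j * β) := fun β => by positivity
  have hsplit : ∀ j, exp (c j * (a • β₁ + b • β₃)) = exp (c j * β₁) ^ a * exp (c j * β₃) ^ b :=
    fun j => by rw [← exp_mul, ← exp_mul, ← exp_add, smul_eq_mul, smul_eq_mul]; ring_nf
  calc log (∑ j, exp (c j * (a • β₁ + b • β₃)))
        ≤ log ((∑ j, exp (c j * β₁)) ^ a * (∑ j, exp (c j * β₃)) ^ b) := by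
          simp only [hsplit]
          exact log_le_log (by positivity) <| Real.sum_rpow_mul_rpow_le _
            (fun _ _ => (exp_pos _).le) (fun _ _ => (exp_pos _).le) (hS β₁) (hS β₃) ha hb hab
    _ = a • log (∑ j, exp (c j * β₁)) + b • log (∑ j, exp (c j * β₃)) := by
          rw [log_mul (by positivity) (by positivity), log_rpow (hS β₁), log_rpow (hS β₃),
            smul_eq_mul, smul_eq_mul]

theorem concaveOn_log_softmax_mul {ι : Type*} [Fintype ι] (c : ι → ℝ) (y : ι) :
    ConcaveOn ℝ univ fun β => log (exp (c y * β) / ∑ j, exp (c j * β)) := by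
  have : Nonempty ι := ⟨y⟩
  refine (((LinearMap.mul ℝ ℝ (c y)).concaveOn convex_univ).sub
    (convexOn_log_sum_exp_mul c)).congr fun β _ => ?_
  have hS : 0 < ∑ j, exp (c j * β) := by positivity
  rw [log_div (exp_ne_zero _) hS.ne', log_exp]
  rfl

theorem QuasiconcaveOn.min_le_of_mem_Icc {β : Type*} [LinearOrder β] {s : Set ℝ} {f : ℝ → β}
    (hf : QuasiconcaveOn ℝ s f) {x y z : ℝ} (hx : x ∈ s) (hz : z ∈ s) (hy : y ∈ Icc x z) :
    min (f x) (f z) ≤ f y :=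
  ((hf _).segment_subset ⟨hx, min_le_left _ _⟩ ⟨hz, min_le_right _ _⟩
    (Icc_subset_segment hy)).2

theorem expected_log_likelihood_unimodal_general
    {X : Type*} [MeasurableSpace X] (m : ℕ)
    (μ : Measure (X × Fin m))
    (l : Fin m → X → ℝ)
    (L : ℝ → ℝ)
    (hL : ∀ T : ℝ, 0 < T →
      L T = ∫ p : X × Fin m,
        Real.log (Real.exp (l p.2 p.1 / T) / ∑ j : Fin m, Real.exp (l j p.1 / T)) ∂μ)
    (hint : ∀ T : ℝ, 0 < T →
      Integrable (fun p : X × Fin m =>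
        Real.log (Real.exp (l p.2 p.1 / T) / ∑ j : Fin m, Real.exp (l j p.1 / T))) μ) :
    ∀ T₁ T₂ T₃ : ℝ, 0 < T₁ → T₁ ≤ T₂ → T₂ ≤ T₃ →
      min (L T₁) (L T₃) ≤ L T₂ := by
  intro T₁ T₂ T₃ hT₁ h12 h23
  have hT₂ : 0 < T₂ := hT₁.trans_le h12
  have hT₃ : 0 < T₃ := hT₂.trans_le h23
  set f : X × Fin m → ℝ → ℝ := fun p β => log (exp (l p.2 p.1 * β) / ∑ j, exp (l j p.1 * β))
  have hLf : ∀ T, 0 < T → L T = ∫ p, f p T⁻¹ ∂μ := fun T hT => by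
    simp only [hL T hT, f, div_eq_mul_inv]
  have hconc : ConcaveOn ℝ (Ioi 0) fun β => ∫ p, f p β ∂μ :=
    integral_concaveOn_of_integrand_ae (convex_Ioi 0)
      (ae_of_all _ fun p => (concaveOn_log_softmax_mul (l · p.1) p.2).subset (subset_univ _)
        (convex_Ioi 0))
      (fun β hβ => by simpa only [f, div_inv_eq_mul] using hint β⁻¹ (inv_pos.2 hβ))
  rw [hLf T₁ hT₁, hLf T₂ hT₂, hLf T₃ hT₃, min_comm]
  exact hconc.quasiconcaveOn.min_le_of_mem_Icc (inv_pos.2 hT₃) (inv_pos.2 hT₁)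
    ⟨inv_anti₀ hT₂ h23, inv_anti₀ hT₁ h12⟩

/-- The expected temperature-scaled log-likelihood is unimodal (quasiconcave) in the
temperature `T` on `(0, ∞)`. -/
theorem expected_log_likelihood_unimodal
    {X : Type*} [MeasurableSpace X] (m : ℕ) (hm : 1 ≤ m)
    (μ : Measure (X × Fin m)) [IsProbabilityMeasure μ]
    (l : Fin m → X → ℝ) (hl : ∀ i, Measurable (l i))
    (L : ℝ → ℝ)
    (hL : ∀ T : ℝ, 0 < T →
      L T = ∫ p : X × Fin m,
        Real.log (Real.exp (l p.2 p.1 / T) / ∑ j : Fin m, Real.exp (l j p.1 / T)) ∂μ)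
    (hint : ∀ T : ℝ, 0 < T →
      Integrable (fun p : X × Fin m =>
        Real.log (Real.exp (l p.2 p.1 / T) / ∑ j : Fin m, Real.exp (l j p.1 / T))) μ) :
    ∀ T₁ T₂ T₃ : ℝ, 0 < T₁ → T₁ ≤ T₂ → T₂ ≤ T₃ →
      min (L T₁) (L T₃) ≤ L T₂ :=
  expected_log_likelihood_unimodal_general m μ l L hL hint
end

section
/- Let m ≥ 1, let X be a measurable space, let μ be a probability measure on X × Fin m, and let l : Fin m → X → ℝ be measurable logit functions. Define the temperature-scaled confidence p̂_T(x) = max_{i} exp(l i x / T) / ∑_{j=1}^m exp(l j x / T) for T > 0, and let a ∈ ℝ be any constant (in particular the classification accuracy a = μ{(x,y) : argmax_i l i x = y}). Then the function T ↦ | a − ∫ p̂_T(x) dμ | is unimodal (quasiconvex) on (0, ∞); that is, for all 0 < T₁ ≤ T₂ ≤ T₃ one has |a − ∫ p̂_{T₂} dμ| ≤ max(|a − ∫ p̂_{T₁} dμ|, |a − ∫ p̂_{T₃} dμ|). -/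
open MeasureTheory Real

/-- Pointwise antitonicity of the max-softmax confidence in the temperature. -/
lemma softmax_antitone {m : ℕ} (hm : 1 ≤ m) (v : Fin m → ℝ)
    {T T' : ℝ} (hT : 0 < T) (hTT' : T ≤ T') :
    (⨆ i : Fin m, Real.exp (v i / T') / ∑ j : Fin m, Real.exp (v j / T')) ≤
    (⨆ i : Fin m, Real.exp (v i / T) / ∑ j : Fin m, Real.exp (v j / T)) := by
  have hT' : (0:ℝ) < T' := lt_of_lt_of_le hT hTT'
  haveI : Nonempty (Fin m) := Fin.pos_iff_nonempty.mp hm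
  obtain ⟨i₀, hi₀⟩ := Finite.exists_max v
  have hSpos : ∀ t : ℝ, 0 < t → 0 < ∑ j : Fin m, Real.exp (v j / t) := fun t ht =>
    Finset.sum_pos (fun j _ => Real.exp_pos _) Finset.univ_nonempty
  have key : ∀ t : ℝ, 0 < t →
      (⨆ i : Fin m, Real.exp (v i / t) / ∑ j : Fin m, Real.exp (v j / t)) =
      (∑ j : Fin m, Real.exp ((v j - v i₀) / t))⁻¹ := by
    intro t ht
    have hsup : (⨆ i : Fin m, Real.exp (v i / t) / ∑ j : Fin m, Real.exp (v j / t)) =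
        Real.exp (v i₀ / t) / ∑ j : Fin m, Real.exp (v j / t) := by
      apply le_antisymm
      · apply ciSup_le
        intro i
        gcongr
        exact hi₀ i
      · exact le_ciSup (f := fun i : Fin m =>
          Real.exp (v i / t) / ∑ j : Fin m, Real.exp (v j / t))
          (Set.Finite.bddAbove (Set.finite_range _)) i₀
    have hs : (∑ j : Fin m, Real.exp ((v j - v i₀) / t)) =
        (∑ j : Fin m, Real.exp (v j / t)) / Real.exp (v i₀ / t) := by
      rw [Finset.sum_div]
      exact Finset.sum_congr rfl fun j _ => by rw [← Real.exp_sub, ← sub_div]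
    rw [hsup, hs, inv_div]
  rw [key T hT, key T' hT']
  apply inv_anti₀
  · exact Finset.sum_pos (fun j _ => Real.exp_pos _) Finset.univ_nonempty
  · apply Finset.sum_le_sum
    intro j _
    apply Real.exp_le_exp.mpr
    have hd : v j - v i₀ ≤ 0 := sub_nonpos.mpr (hi₀ j)
    rw [div_le_div_iff₀ hT hT']
    exact mul_le_mul_of_nonpos_left hTT' hd

/-- The max-softmax confidence lies in `[0, 1]`. -/
lemma softmax_bounds {m : ℕ} (hm : 1 ≤ m) (v : Fin m → ℝ) {T : ℝ} (hT : 0 < T) :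
    0 ≤ (⨆ i : Fin m, Real.exp (v i / T) / ∑ j : Fin m, Real.exp (v j / T)) ∧
    (⨆ i : Fin m, Real.exp (v i / T) / ∑ j : Fin m, Real.exp (v j / T)) ≤ 1 := by
  haveI : Nonempty (Fin m) := Fin.pos_iff_nonempty.mp hm
  have hSpos : 0 < ∑ j : Fin m, Real.exp (v j / T) :=
    Finset.sum_pos (fun j _ => Real.exp_pos _) Finset.univ_nonempty
  constructor
  · refine le_ciSup_of_le (f := fun i : Fin m =>
      Real.exp (v i / T) / ∑ j : Fin m, Real.exp (v j / T))
      (Set.Finite.bddAbove (Set.finite_range _)) (Classical.arbitrary _) ?_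
    exact (div_pos (Real.exp_pos _) hSpos).le
  · apply ciSup_le
    intro i
    rw [div_le_one hSpos]
    exact Finset.single_le_sum (fun j _ => (Real.exp_pos (v j / T)).le)
      (Finset.mem_univ i)

/-- The absolute difference between any constant `a` (e.g. the classification accuracy)
and the expected temperature-scaled confidence is unimodal (quasiconvex) in the
temperature `T` on `(0, ∞)`. -/
theorem acc_minus_expected_confidence_unimodal
    {X : Type*} [MeasurableSpace X] (m : ℕ) (hm : 1 ≤ m)
    (μ : Measure (X × Fin m)) [IsProbabilityMeasure μ]
    (l : Fin m → X → ℝ) (hl : ∀ i, Measurable (l i))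
    (a : ℝ)
    (phat : ℝ → X → ℝ)
    (hphat : ∀ T : ℝ, 0 < T → ∀ x : X,
      phat T x = ⨆ i : Fin m, Real.exp (l i x / T) / ∑ j : Fin m, Real.exp (l j x / T)) :
    ∀ T₁ T₂ T₃ : ℝ, 0 < T₁ → T₁ ≤ T₂ → T₂ ≤ T₃ →
      |a - ∫ p : X × Fin m, phat T₂ p.1 ∂μ| ≤
        max |a - ∫ p : X × Fin m, phat T₁ p.1 ∂μ| |a - ∫ p : X × Fin m, phat T₃ p.1 ∂μ| := by
  intro T₁ T₂ T₃ h1 h12 h23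
  have h2 : 0 < T₂ := lt_of_lt_of_le h1 h12
  have h3 : 0 < T₃ := lt_of_lt_of_le h2 h23
  -- integrability for any positive temperature
  have hint : ∀ T : ℝ, 0 < T → Integrable (fun p : X × Fin m => phat T p.1) μ := by
    intro T hT
    have heq : (fun p : X × Fin m => phat T p.1) = fun p : X × Fin m =>
        ⨆ i : Fin m, Real.exp (l i p.1 / T) / ∑ j : Fin m, Real.exp (l j p.1 / T) :=
      funext fun p => hphat T hT p.1
    rw [heq]
    have hmeas : Measurable (fun x : X =>
        ⨆ i : Fin m, Real.exp (l i x / T) / ∑ j : Fin m, Real.exp (l j x / T)) := by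
      measurability
    apply (integrable_const (1:ℝ)).mono'
      ((hmeas.comp measurable_fst).aestronglyMeasurable)
    apply Filter.Eventually.of_forall
    intro p
    simp only [Function.comp_apply, Real.norm_eq_abs]
    obtain ⟨hb0, hb1⟩ := softmax_bounds hm (fun i => l i p.1) hT
    rw [abs_of_nonneg hb0]
    exact hb1
  -- integral is antitone in temperature
  have hmono : ∀ T T' : ℝ, 0 < T → T ≤ T' →
      (∫ p : X × Fin m, phat T' p.1 ∂μ) ≤ ∫ p : X × Fin m, phat T p.1 ∂μ := by
    intro T T' hT hTT'
    have hT' : 0 < T' := lt_of_lt_of_le hT hTT'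
    apply integral_mono (hint T' hT') (hint T hT)
    intro p
    show phat T' p.1 ≤ phat T p.1
    rw [hphat T' hT', hphat T hT]
    exact softmax_antitone hm (fun i => l i p.1) hT hTT'
  set I₁ := ∫ p : X × Fin m, phat T₁ p.1 ∂μ
  set I₂ := ∫ p : X × Fin m, phat T₂ p.1 ∂μ
  set I₃ := ∫ p : X × Fin m, phat T₃ p.1 ∂μ
  have hI21 : I₂ ≤ I₁ := hmono T₁ T₂ h1 h12
  have hI32 : I₃ ≤ I₂ := hmono T₂ T₃ h2 h23
  have k1 : I₁ - a ≤ |a - I₁| := by rw [abs_sub_comm]; exact le_abs_self _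
  have k3 : a - I₃ ≤ |a - I₃| := le_abs_self _
  rcases le_total a I₂ with h | h
  · apply le_max_of_le_left
    have : |a - I₂| = I₂ - a := by rw [abs_sub_comm, abs_of_nonneg (by linarith)]
    linarith
  · apply le_max_of_le_right
    have : |a - I₂| = a - I₂ := abs_of_nonneg (by linarith)
    linarith
end

section
/- Let m ≥ 1 and let l₁, …, l_m ∈ ℝ be fixed logits. Then the function T ↦ max_{i} exp(l_i / T) / ∑_{j=1}^m exp(l_j / T) is monotonically non-increasing (antitone) on (0, ∞): for all 0 < T₁ ≤ T₂, max_i exp(l_i/T₂)/∑_j exp(l_j/T₂) ≤ max_i exp(l_i/T₁)/∑_j exp(l_j/T₁). -/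
open Real

lemma sum_exp_factor (m : ℕ) (l : Fin m → ℝ) (M T : ℝ) :
    (∑ j : Fin m, Real.exp (l j / T)) =
      Real.exp (M / T) * ∑ j : Fin m, Real.exp ((l j - M) / T) := by
  rw [Finset.mul_sum]
  refine Finset.sum_congr rfl fun j _ => ?_
  rw [← Real.exp_add]
  ring_nf

/-- For fixed real logits, the temperature-scaled confidence
`max_i exp(l i / T) / ∑ j exp(l j / T)` is monotonically non-increasing in `T` on `(0, ∞)`. -/
theorem confidence_antitone_fixed_logits
    (m : ℕ) (hm : 1 ≤ m) (l : Fin m → ℝ) :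
    ∀ T₁ T₂ : ℝ, 0 < T₁ → T₁ ≤ T₂ →
      (⨆ i : Fin m, Real.exp (l i / T₂) / ∑ j : Fin m, Real.exp (l j / T₂)) ≤
        (⨆ i : Fin m, Real.exp (l i / T₁) / ∑ j : Fin m, Real.exp (l j / T₁)) := by
  intro T₁ T₂ hT₁ hT
  haveI : Nonempty (Fin m) := Fin.pos_iff_nonempty.mp hm
  have hT₂ : (0:ℝ) < T₂ := lt_of_lt_of_le hT₁ hT
  set M := Finset.univ.sup' Finset.univ_nonempty l with hM
  obtain ⟨i₀, _, hi₀⟩ := Finset.exists_mem_eq_sup' Finset.univ_nonempty l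
  have hle : ∀ i, l i ≤ M := fun i => Finset.le_sup' l (Finset.mem_univ i)
  -- sums of shifted exponentials
  have hSpos : ∀ T : ℝ, (0:ℝ) < ∑ j : Fin m, Real.exp ((l j - M) / T) :=
    fun T => Finset.sum_pos (fun j _ => Real.exp_pos _) Finset.univ_nonempty
  have hsum : ∀ T : ℝ, (0:ℝ) < ∑ j : Fin m, Real.exp (l j / T) :=
    fun T => Finset.sum_pos (fun j _ => Real.exp_pos _) Finset.univ_nonempty
  have key : ∀ T : ℝ, Real.exp (M / T) / (∑ j : Fin m, Real.exp (l j / T)) =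
      1 / ∑ j : Fin m, Real.exp ((l j - M) / T) := by
    intro T
    rw [sum_exp_factor m l M T]
    rw [div_mul_eq_div_div, div_self (Real.exp_pos _).ne']
  -- shifted sums are monotone in T
  have hmono : (∑ j : Fin m, Real.exp ((l j - M) / T₁)) ≤
      ∑ j : Fin m, Real.exp ((l j - M) / T₂) := by
    refine Finset.sum_le_sum fun j _ => Real.exp_le_exp.mpr ?_
    have hnp : l j - M ≤ 0 := sub_nonpos.mpr (hle j)
    rw [div_le_div_iff₀ hT₁ hT₂]
    nlinarith
  have core : Real.exp (M / T₂) / (∑ j : Fin m, Real.exp (l j / T₂)) ≤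
      Real.exp (M / T₁) / (∑ j : Fin m, Real.exp (l j / T₁)) := by
    rw [key T₁, key T₂]
    exact one_div_le_one_div_of_le (hSpos T₁) hmono
  refine ciSup_le fun i => ?_
  have h1 : Real.exp (l i / T₂) / (∑ j : Fin m, Real.exp (l j / T₂)) ≤
      Real.exp (M / T₂) / (∑ j : Fin m, Real.exp (l j / T₂)) := by
    gcongr
    exact hle i
  have h2 : Real.exp (M / T₁) / (∑ j : Fin m, Real.exp (l j / T₁)) ≤
      ⨆ i : Fin m, Real.exp (l i / T₁) / ∑ j : Fin m, Real.exp (l j / T₁) := by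
    have := le_ciSup (Set.Finite.bddAbove (Set.finite_range
      (fun i : Fin m => Real.exp (l i / T₁) / ∑ j : Fin m, Real.exp (l j / T₁)))) i₀
    rwa [show M = l i₀ from hi₀] 
  calc Real.exp (l i / T₂) / (∑ j : Fin m, Real.exp (l j / T₂)) ≤ _ := h1
    _ ≤ _ := core
    _ ≤ _ := h2
end

section
/- Let m ≥ 1, let X be a measurable space, let μ be a probability measure on X, and let l : Fin m → X → ℝ be measurable logit functions. Define the temperature-scaled confidence p̂_T(x) = max_i exp(l i x / T) / ∑_{j=1}^m exp(l j x / T) for T > 0. Then the expected confidence T ↦ ∫ p̂_T(x) dμ(x) is monotonically non-increasing (antitone) on (0, ∞). -/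
open MeasureTheory Real

lemma key_pointwise (m : ℕ) (hm : 1 ≤ m) (a : Fin m → ℝ) {T₁ T₂ : ℝ}
    (h1 : 0 < T₁) (h12 : T₁ ≤ T₂) :
    (⨆ i : Fin m, Real.exp (a i / T₂) / ∑ j : Fin m, Real.exp (a j / T₂)) ≤
      ⨆ i : Fin m, Real.exp (a i / T₁) / ∑ j : Fin m, Real.exp (a j / T₁) := by
  have h2 : (0:ℝ) < T₂ := lt_of_lt_of_le h1 h12
  haveI : Nonempty (Fin m) := ⟨⟨0, hm⟩⟩
  obtain ⟨i₀, hi₀⟩ := Finite.exists_max a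
  have sumpos : ∀ T : ℝ, 0 < ∑ j : Fin m, Real.exp (a j / T) :=
    fun T => Finset.sum_pos (fun j _ => Real.exp_pos _) Finset.univ_nonempty
  have hsup : ∀ T : ℝ, 0 < T →
      (⨆ i : Fin m, Real.exp (a i / T) / ∑ j : Fin m, Real.exp (a j / T)) =
        Real.exp (a i₀ / T) / ∑ j : Fin m, Real.exp (a j / T) := by
    intro T hT
    apply le_antisymm
    · apply ciSup_le
      intro i
      gcongr
      exact hi₀ i
    · exact le_ciSup (Set.Finite.bddAbove (Set.finite_range
        (fun i : Fin m => Real.exp (a i / T) / ∑ j : Fin m, Real.exp (a j / T)))) i₀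
  rw [hsup T₁ h1, hsup T₂ h2]
  have hfact : ∀ T : ℝ, 0 < T →
      Real.exp (a i₀ / T) / ∑ j : Fin m, Real.exp (a j / T) =
        1 / ∑ j : Fin m, Real.exp ((a j - a i₀) / T) := by
    intro T hT
    rw [div_eq_div_iff (sumpos T).ne' (Finset.sum_pos (fun j _ => Real.exp_pos _)
      Finset.univ_nonempty).ne', one_mul, Finset.mul_sum]
    apply Finset.sum_congr rfl
    intro j _
    rw [← Real.exp_add, sub_div, ← add_sub_assoc]
    ring_nf
  rw [hfact T₁ h1, hfact T₂ h2]
  apply one_div_le_one_div_of_le (Finset.sum_pos (fun j _ => Real.exp_pos _)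
    Finset.univ_nonempty)
  apply Finset.sum_le_sum
  intro j _
  rw [Real.exp_le_exp, div_le_div_iff₀ h1 h2]
  exact mul_le_mul_of_nonpos_left h12 (sub_nonpos.mpr (hi₀ j))

lemma conf_integrable {X : Type*} [MeasurableSpace X] (m : ℕ) (hm : 1 ≤ m)
    (μ : Measure X) [IsProbabilityMeasure μ]
    (l : Fin m → X → ℝ) (hl : ∀ i, Measurable (l i)) (T : ℝ) :
    Integrable (fun x => ⨆ i : Fin m, Real.exp (l i x / T) /
      ∑ j : Fin m, Real.exp (l j x / T)) μ := by
  haveI : Nonempty (Fin m) := ⟨⟨0, hm⟩⟩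
  have hmeas : Measurable (fun x => ⨆ i : Fin m, Real.exp (l i x / T) /
      ∑ j : Fin m, Real.exp (l j x / T)) := by
    apply Measurable.iSup
    intro i
    exact (((hl i).div_const T).exp).div
      (Finset.measurable_sum _ (fun j _ => ((hl j).div_const T).exp))
  apply Integrable.mono' (integrable_const (1:ℝ)) hmeas.aestronglyMeasurable
  filter_upwards with x
  have sumpos : 0 < ∑ j : Fin m, Real.exp (l j x / T) :=
    Finset.sum_pos (fun j _ => Real.exp_pos _) Finset.univ_nonempty
  rw [Real.norm_eq_abs, abs_le]
  constructor
  · have : (0:ℝ) ≤ Real.exp (l ⟨0, hm⟩ x / T) / ∑ j : Fin m, Real.exp (l j x / T) :=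
      div_nonneg (Real.exp_pos _).le sumpos.le
    refine le_trans (by linarith) (le_ciSup (Set.Finite.bddAbove (Set.finite_range _)) ⟨0, hm⟩)
  · apply ciSup_le
    intro i
    rw [div_le_one sumpos]
    exact Finset.single_le_sum (fun j _ => (Real.exp_pos (l j x / T)).le) (Finset.mem_univ i)

/-- The expected temperature-scaled confidence is monotonically non-increasing in the
temperature `T` on `(0, ∞)`. -/
theorem expected_confidence_antitone
    {X : Type*} [MeasurableSpace X] (m : ℕ) (hm : 1 ≤ m)
    (μ : Measure X) [IsProbabilityMeasure μ]
    (l : Fin m → X → ℝ) (hl : ∀ i, Measurable (l i)) :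
    ∀ T₁ T₂ : ℝ, 0 < T₁ → T₁ ≤ T₂ →
      (∫ x, ⨆ i : Fin m, Real.exp (l i x / T₂) / ∑ j : Fin m, Real.exp (l j x / T₂) ∂μ) ≤
        (∫ x, ⨆ i : Fin m, Real.exp (l i x / T₁) / ∑ j : Fin m, Real.exp (l j x / T₁) ∂μ) := by
  intro T₁ T₂ h1 h12
  apply integral_mono (conf_integrable m hm μ l hl T₂) (conf_integrable m hm μ l hl T₁)
  intro x
  exact key_pointwise m hm (fun i => l i x) h1 h12
end

section
/- Let m ≥ 1 and let l₁, …, l_m ∈ ℝ. Then the softmax-weighted average of the logits, T ↦ ( ∑_{j=1}^m l_j · exp(l_j / T) ) / ( ∑_{j=1}^m exp(l_j / T) ), is monotonically non-increasing (antitone) on (0, ∞). -/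
open Real

private lemma ptwise {T₁ T₂ : ℝ} (hT₁ : 0 < T₁) (hle : T₁ ≤ T₂) (x y : ℝ) :
    0 ≤ (x - y) * (Real.exp (x / T₁) * Real.exp (y / T₂) -
      Real.exp (x / T₂) * Real.exp (y / T₁)) := by
  have hT₂ : 0 < T₂ := lt_of_lt_of_le hT₁ hle
  have hinv : (1:ℝ)/T₂ ≤ 1/T₁ := one_div_le_one_div_of_le hT₁ hle
  rcases le_total x y with h | h
  · have h1 : x / T₁ + y / T₂ ≤ x / T₂ + y / T₁ := by
      have e : x/T₂ + y/T₁ - (x/T₁ + y/T₂) = (y - x) * (1/T₁ - 1/T₂) := by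
        field_simp; ring
      nlinarith [mul_nonneg (sub_nonneg.mpr h) (sub_nonneg.mpr hinv)]
    have h2 := Real.exp_le_exp.mpr h1
    rw [Real.exp_add, Real.exp_add] at h2
    nlinarith
  · have h1 : x / T₂ + y / T₁ ≤ x / T₁ + y / T₂ := by
      have e : x/T₁ + y/T₂ - (x/T₂ + y/T₁) = (x - y) * (1/T₁ - 1/T₂) := by
        field_simp; ring
      nlinarith [mul_nonneg (sub_nonneg.mpr h) (sub_nonneg.mpr hinv)]
    have h2 := Real.exp_le_exp.mpr h1
    rw [Real.exp_add, Real.exp_add] at h2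
    nlinarith

/-- The softmax-weighted average of fixed logits,
`(∑ j, l j · exp(l j / T)) / (∑ j, exp(l j / T))`, is monotonically non-increasing in the
temperature `T` on `(0, ∞)`. -/
theorem softmax_weighted_average_antitone
    (m : ℕ) (hm : 1 ≤ m) (l : Fin m → ℝ) :
    ∀ T₁ T₂ : ℝ, 0 < T₁ → T₁ ≤ T₂ →
      (∑ j : Fin m, l j * Real.exp (l j / T₂)) / (∑ j : Fin m, Real.exp (l j / T₂)) ≤
        (∑ j : Fin m, l j * Real.exp (l j / T₁)) / (∑ j : Fin m, Real.exp (l j / T₁)) := by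
  intro T₁ T₂ hT₁ hle
  have hT₂ : 0 < T₂ := lt_of_lt_of_le hT₁ hle
  haveI : Nonempty (Fin m) := ⟨⟨0, hm⟩⟩
  have hpos1 : 0 < ∑ j : Fin m, Real.exp (l j / T₁) :=
    Finset.sum_pos (fun j _ => Real.exp_pos _) Finset.univ_nonempty
  have hpos2 : 0 < ∑ j : Fin m, Real.exp (l j / T₂) :=
    Finset.sum_pos (fun j _ => Real.exp_pos _) Finset.univ_nonempty
  rw [div_le_div_iff₀ hpos2 hpos1]
  rw [← sub_nonneg]
  set E1 : Fin m → ℝ := fun j => Real.exp (l j / T₁) with hE1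
  set E2 : Fin m → ℝ := fun j => Real.exp (l j / T₂) with hE2
  have key : (∑ j : Fin m, l j * E1 j) * (∑ j : Fin m, E2 j) -
      (∑ j : Fin m, l j * E2 j) * (∑ j : Fin m, E1 j) =
      ∑ j : Fin m, ∑ k : Fin m,
        (l j * E1 j * E2 k - l j * E2 j * E1 k) := by
    rw [Finset.sum_mul_sum, Finset.sum_mul_sum, ← Finset.sum_sub_distrib]
    exact Finset.sum_congr rfl fun j _ => by rw [← Finset.sum_sub_distrib]
  rw [key]
  set f : Fin m → Fin m → ℝ := fun j k => l j * E1 j * E2 k - l j * E2 j * E1 k with hf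
  have h2S : (2:ℝ) * (∑ j : Fin m, ∑ k : Fin m, f j k) =
      ∑ j : Fin m, ∑ k : Fin m,
        (l j - l k) * (E1 j * E2 k - E2 j * E1 k) := by
    have hc : (∑ j : Fin m, ∑ k : Fin m, f j k) =
        ∑ j : Fin m, ∑ k : Fin m, f k j := Finset.sum_comm
    rw [two_mul]
    nth_rewrite 2 [hc]
    rw [← Finset.sum_add_distrib]
    refine Finset.sum_congr rfl fun j _ => ?_
    rw [← Finset.sum_add_distrib]
    refine Finset.sum_congr rfl fun k _ => ?_
    simp only [hf]
    ring
  have hnn : 0 ≤ ∑ j : Fin m, ∑ k : Fin m,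
      (l j - l k) * (E1 j * E2 k - E2 j * E1 k) :=
    Finset.sum_nonneg fun j _ => Finset.sum_nonneg fun k _ =>
      ptwise hT₁ hle (l j) (l k)
  linarith
end

section
/- Let m ≥ 1 and let l₁, …, l_m ∈ ℝ be logits that are not all equal (i.e. there exist j, k with l_j ≠ l_k). Then the softmax-weighted average of the logits, T ↦ ( ∑_{j=1}^m l_j · exp(l_j / T) ) / ( ∑_{j=1}^m exp(l_j / T) ), is strictly decreasing on (0, ∞). Conversely, if all the l_j are equal, this function is constant on (0, ∞). -/
open Real Finset

lemma term_nonneg {β₁ β₂ : ℝ} (h : β₁ < β₂) (a b : ℝ) :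
    0 ≤ (a - b) * (Real.exp (β₂ * a + β₁ * b) - Real.exp (β₁ * a + β₂ * b)) := by
  rcases le_total a b with h' | h'
  · have h1 : a - b ≤ 0 := by linarith
    have h2 : Real.exp (β₂ * a + β₁ * b) - Real.exp (β₁ * a + β₂ * b) ≤ 0 := by
      have : β₂ * a + β₁ * b ≤ β₁ * a + β₂ * b := by nlinarith
      simpa using Real.exp_le_exp.2 this
    have := mul_nonneg (neg_nonneg.2 h1) (neg_nonneg.2 h2)
    rwa [neg_mul_neg] at this
  · apply mul_nonneg (by linarith)
    have : β₁ * a + β₂ * b ≤ β₂ * a + β₁ * b := by nlinarith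
    simpa using Real.exp_le_exp.2 this

lemma term_pos {β₁ β₂ : ℝ} (h : β₁ < β₂) {a b : ℝ} (hab : a ≠ b) :
    0 < (a - b) * (Real.exp (β₂ * a + β₁ * b) - Real.exp (β₁ * a + β₂ * b)) := by
  rcases lt_or_gt_of_ne hab with h' | h'
  · have h1 : a - b < 0 := by linarith
    have h2 : Real.exp (β₂ * a + β₁ * b) - Real.exp (β₁ * a + β₂ * b) < 0 := by
      have : β₂ * a + β₁ * b < β₁ * a + β₂ * b := by nlinarith
      simpa using Real.exp_lt_exp.2 this
    have := mul_pos (neg_pos.2 h1) (neg_pos.2 h2)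
    rwa [neg_mul_neg] at this
  · apply mul_pos (by linarith)
    have : β₁ * a + β₂ * b < β₂ * a + β₁ * b := by nlinarith
    simpa using Real.exp_lt_exp.2 this

lemma key (m : ℕ) (l : Fin m → ℝ) (hne : ∃ j k : Fin m, l j ≠ l k)
    {β₁ β₂ : ℝ} (h : β₁ < β₂) :
    (∑ j : Fin m, l j * Real.exp (β₁ * l j)) * (∑ j : Fin m, Real.exp (β₂ * l j)) <
    (∑ j : Fin m, l j * Real.exp (β₂ * l j)) * (∑ j : Fin m, Real.exp (β₁ * l j)) := by
  obtain ⟨j₀, k₀, hjk⟩ := hne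
  have hS : 0 < ∑ j : Fin m, ∑ k : Fin m,
      (l j - l k) * (Real.exp (β₂ * l j + β₁ * l k) - Real.exp (β₁ * l j + β₂ * l k)) := by
    apply Finset.sum_pos' (fun j _ => Finset.sum_nonneg fun k _ => term_nonneg h _ _)
    exact ⟨j₀, Finset.mem_univ _, Finset.sum_pos' (fun k _ => term_nonneg h _ _)
      ⟨k₀, Finset.mem_univ _, term_pos h hjk⟩⟩
  have pt : ∀ j k : Fin m,
      (l j - l k) * (Real.exp (β₂ * l j + β₁ * l k) - Real.exp (β₁ * l j + β₂ * l k))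
      = (l j * Real.exp (β₂ * l j)) * Real.exp (β₁ * l k)
        - (l j * Real.exp (β₁ * l j)) * Real.exp (β₂ * l k)
        - Real.exp (β₂ * l j) * (l k * Real.exp (β₁ * l k))
        + Real.exp (β₁ * l j) * (l k * Real.exp (β₂ * l k)) := by
    intro j k; rw [Real.exp_add, Real.exp_add]; ring
  have expand : (∑ j : Fin m, ∑ k : Fin m,
      (l j - l k) * (Real.exp (β₂ * l j + β₁ * l k) - Real.exp (β₁ * l j + β₂ * l k)))
      = 2 * ((∑ j : Fin m, l j * Real.exp (β₂ * l j)) * (∑ j : Fin m, Real.exp (β₁ * l j))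
        - (∑ j : Fin m, l j * Real.exp (β₁ * l j)) * (∑ j : Fin m, Real.exp (β₂ * l j))) := by
    simp_rw [pt, Finset.sum_add_distrib, Finset.sum_sub_distrib,
      ← Finset.mul_sum, ← Finset.sum_mul]
    ring
  rw [expand] at hS
  linarith

/-- If the fixed logits are not all equal, the softmax-weighted average of the logits is
strictly decreasing in the temperature on `(0, ∞)`; if they are all equal, it is constant
on `(0, ∞)`. -/
theorem softmax_weighted_average_strictAnti_iff
    (m : ℕ) (hm : 1 ≤ m) (l : Fin m → ℝ) :
    ((∃ j k : Fin m, l j ≠ l k) →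
      StrictAntiOn
        (fun T : ℝ =>
          (∑ j : Fin m, l j * Real.exp (l j / T)) / (∑ j : Fin m, Real.exp (l j / T)))
        (Set.Ioi (0 : ℝ))) ∧
    ((∀ j k : Fin m, l j = l k) →
      ∀ T₁ ∈ Set.Ioi (0 : ℝ), ∀ T₂ ∈ Set.Ioi (0 : ℝ),
        (∑ j : Fin m, l j * Real.exp (l j / T₁)) / (∑ j : Fin m, Real.exp (l j / T₁)) =
          (∑ j : Fin m, l j * Real.exp (l j / T₂)) / (∑ j : Fin m, Real.exp (l j / T₂))) := by
  have hm0 : 0 < m := hm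
  have hpos : ∀ T : ℝ, 0 < T → 0 < ∑ j : Fin m, Real.exp (l j / T) := fun T hT =>
    Finset.sum_pos (fun j _ => Real.exp_pos _) (Finset.univ_nonempty_iff.2 ⟨⟨0, hm0⟩⟩)
  constructor
  · intro hne T₁ hT₁ T₂ hT₂ hlt
    simp only [Set.mem_Ioi] at hT₁ hT₂
    have hβ : (1 : ℝ) / T₂ < 1 / T₁ := by
      exact one_div_lt_one_div_of_lt hT₁ hlt
    have hk := key m l hne hβ
    have hdiv : ∀ j : Fin m, ∀ T : ℝ, l j / T = (1 / T) * l j := by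
      intro j T; rw [div_eq_mul_inv, one_div]; ring
    rw [div_lt_div_iff₀ (hpos T₂ hT₂) (hpos T₁ hT₁)]
    simp_rw [hdiv]
    exact hk
  · intro hall T₁ hT₁ T₂ hT₂
    simp only [Set.mem_Ioi] at hT₁ hT₂
    have hc : ∀ j : Fin m, l j = l ⟨0, hm0⟩ := fun j => hall j _
    have heq : ∀ T : ℝ, 0 < T →
        (∑ j : Fin m, l j * Real.exp (l j / T)) / (∑ j : Fin m, Real.exp (l j / T))
          = l ⟨0, hm0⟩ := by
      intro T hT
      have : (∑ j : Fin m, l j * Real.exp (l j / T))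
          = l ⟨0, hm0⟩ * ∑ j : Fin m, Real.exp (l j / T) := by
        rw [Finset.mul_sum]
        exact Finset.sum_congr rfl fun j _ => by rw [hc j]
      rw [this, mul_div_assoc, div_self (ne_of_gt (hpos T hT)), mul_one]
    rw [heq T₁ hT₁, heq T₂ hT₂]
end

section
/- Let z ≥ 1, let ε > 0 and Δ > 0, and let a, b, x : Fin z → ℝ with ∑_{i} |a i − b i| ≤ Δ. Then ∏_{i=1}^z exp( −ε |a i − x i| / Δ ) ≤ exp(ε) · ∏_{i=1}^z exp( −ε |b i − x i| / Δ ). In other words, the ratio of the (unnormalized) product Laplace densities centered at a and at b, evaluated at any point x, is at most e^ε whenever the L1 distance between the centers is at most the sensitivity Δ. -/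
open Real

/-- Core inequality of the Laplace mechanism: the ratio of product Laplace densities
centered at `a` and at `b` is at most `e^ε` whenever `‖a − b‖₁ ≤ Δ`. -/
theorem laplace_density_ratio_le
    (z : ℕ) (hz : 1 ≤ z) (ε Δ : ℝ) (hε : 0 < ε) (hΔ : 0 < Δ)
    (a b x : Fin z → ℝ) (hab : ∑ i : Fin z, |a i - b i| ≤ Δ) :
    ∏ i : Fin z, Real.exp (-ε * |a i - x i| / Δ) ≤
      Real.exp ε * ∏ i : Fin z, Real.exp (-ε * |b i - x i| / Δ) := by
  rw [← Real.exp_sum, ← Real.exp_sum, ← Real.exp_add, Real.exp_le_exp]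
  have key : ∑ i : Fin z, (-ε * |a i - x i| / Δ - -ε * |b i - x i| / Δ) ≤ ε := by
    have h1 : ∀ i : Fin z, -ε * |a i - x i| / Δ - -ε * |b i - x i| / Δ
        ≤ ε / Δ * |a i - b i| := by
      intro i
      have htri : |b i - x i| - |a i - x i| ≤ |a i - b i| := by
        have := abs_sub_abs_le_abs_sub (b i - x i) (a i - x i)
        have h2 : |b i - x i - (a i - x i)| = |a i - b i| := by
          rw [show b i - x i - (a i - x i) = -(a i - b i) by ring, abs_neg]
        linarith
      have : -ε * |a i - x i| / Δ - -ε * |b i - x i| / Δ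
          = ε / Δ * (|b i - x i| - |a i - x i|) := by ring
      rw [this]
      exact mul_le_mul_of_nonneg_left htri (by positivity)
    calc ∑ i : Fin z, (-ε * |a i - x i| / Δ - -ε * |b i - x i| / Δ)
        ≤ ∑ i : Fin z, ε / Δ * |a i - b i| := Finset.sum_le_sum fun i _ => h1 i
      _ = ε / Δ * ∑ i : Fin z, |a i - b i| := by rw [Finset.mul_sum]
      _ ≤ ε / Δ * Δ := mul_le_mul_of_nonneg_left hab (by positivity)
      _ = ε := by field_simp
  have := Finset.sum_sub_distrib (f := fun i : Fin z => -ε * |a i - x i| / Δ)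
    (g := fun i : Fin z => -ε * |b i - x i| / Δ) (s := Finset.univ)
  linarith
end

section
/- Let z ≥ 1, let ε > 0 and Δ > 0, and for c : Fin z → ℝ let μ_c be the product measure on ℝ^z (functions Fin z → ℝ) whose i-th factor is the measure on ℝ with density t ↦ (ε/(2Δ)) · exp(−ε |t − c i| / Δ) with respect to Lebesgue measure. Then for any a, b : Fin z → ℝ with ∑_i |a i − b i| ≤ Δ and any measurable set S ⊆ ℝ^z, one has μ_a(S) ≤ exp(ε) · μ_b(S). That is, the Laplace mechanism with per-coordinate noise scale Δ/ε preserves ε-differential privacy for any query of L1 sensitivity Δ. -/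
open MeasureTheory Real

private lemma lintegral_fin_prod {n : ℕ} {E : Type*} [MeasurableSpace E]
    (ν : Fin n → Measure E) [∀ i, SigmaFinite (ν i)]
    (f : Fin n → E → ENNReal) (hf : ∀ i, Measurable (f i)) :
    ∫⁻ x, ∏ i, f i (x i) ∂Measure.pi ν = ∏ i, ∫⁻ t, f i t ∂ν i := by
  induction n with
  | zero =>
      simp [Measure.pi_of_empty ν]
  | succ n ih =>
      have h := (measurePreserving_piFinSuccAbove ν 0).symm
      have hmeas : Measurable fun x : Fin (n + 1) → E => ∏ i, f i (x i) :=
        Finset.measurable_prod _ fun i _ => (hf i).comp (measurable_pi_apply i)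
      rw [← h.lintegral_comp hmeas]
      simp_rw [MeasurableEquiv.piFinSuccAbove_symm_apply, Fin.insertNthEquiv,
        Fin.prod_univ_succ, Fin.insertNth_zero]
      simp only [Fin.zero_succAbove, cast_eq, Equiv.coe_fn_mk, Fin.cons_zero, Fin.cons_succ]
      have hmeas2 : Measurable fun y : Fin n → E =>
          ∏ j : Fin n, f (Fin.succ j) (y j) :=
        Finset.measurable_prod _ fun j _ =>
          (hf _).comp (measurable_pi_apply j)
      rw [MeasureTheory.lintegral_prod_mul (hf 0).aemeasurable hmeas2.aemeasurable]
      rw [ih (fun j => ν (Fin.succ j)) (fun j => f (Fin.succ j)) (fun j => hf _)]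

private lemma pi_withDensity {n : ℕ} {E : Type*} [MeasurableSpace E]
    (ν : Fin n → Measure E) [∀ i, SigmaFinite (ν i)]
    (f : Fin n → E → ENNReal) (hf : ∀ i, Measurable (f i))
    [∀ i, SigmaFinite ((ν i).withDensity (f i))] :
    Measure.pi (fun i => (ν i).withDensity (f i)) =
      (Measure.pi ν).withDensity (fun x => ∏ i, f i (x i)) := by
  refine Measure.pi_eq fun s hs => ?_
  rw [withDensity_apply _ (MeasurableSet.univ_pi hs)]
  rw [← lintegral_indicator (MeasurableSet.univ_pi hs)]
  have key : ∀ x : Fin n → E,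
      (Set.pi Set.univ s).indicator (fun x => ∏ i, f i (x i)) x =
        ∏ i, (s i).indicator (f i) (x i) := by
    intro x
    by_cases hx : x ∈ Set.pi Set.univ s
    · rw [Set.indicator_of_mem hx]
      exact Finset.prod_congr rfl fun i _ =>
        (Set.indicator_of_mem (hx i (Set.mem_univ i)) _).symm
    · rw [Set.indicator_of_notMem hx]
      rw [Set.mem_univ_pi] at hx
      push_neg at hx
      obtain ⟨i, hi⟩ := hx
      exact (Finset.prod_eq_zero (Finset.mem_univ i)
        (Set.indicator_of_notMem hi _)).symm
  simp_rw [key]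
  rw [lintegral_fin_prod ν _ (fun i => (hf i).indicator (hs i))]
  exact Finset.prod_congr rfl fun i _ => by
    rw [lintegral_indicator (hs i), withDensity_apply _ (hs i)]

/-- The Laplace mechanism with per-coordinate noise scale `Δ/ε` preserves
`ε`-differential privacy: if `μ_c` is the product of Laplace distributions of scale `Δ/ε`
centered at the coordinates of `c`, then for centers `a`, `b` with `‖a − b‖₁ ≤ Δ` and any
measurable set `S`, `μ_a(S) ≤ e^ε · μ_b(S)`. -/
theorem laplace_mechanism_dp
    (z : ℕ) (hz : 1 ≤ z) (ε Δ : ℝ) (hε : 0 < ε) (hΔ : 0 < Δ)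
    (μ : (Fin z → ℝ) → Measure (Fin z → ℝ))
    (hμ : ∀ c : Fin z → ℝ, μ c = Measure.pi (fun i =>
      (volume : Measure ℝ).withDensity (fun t =>
        ENNReal.ofReal ((ε / (2 * Δ)) * Real.exp (-ε * |t - c i| / Δ)))))
    (a b : Fin z → ℝ) (hab : ∑ i : Fin z, |a i - b i| ≤ Δ)
    (S : Set (Fin z → ℝ)) (hS : MeasurableSet S) :
    μ a S ≤ ENNReal.ofReal (Real.exp ε) * μ b S := by
  -- the real-valued densities
  set g : (Fin z → ℝ) → ℝ → ℝ → ENNReal := fun c => fun ci t =>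
    ENNReal.ofReal ((ε / (2 * Δ)) * Real.exp (-ε * |t - ci| / Δ)) with hg
  have hmeas : ∀ (c : ℝ), Measurable fun t : ℝ =>
      ENNReal.ofReal ((ε / (2 * Δ)) * Real.exp (-ε * |t - c| / Δ)) := by
    intro c
    apply ENNReal.measurable_ofReal.comp
    apply Measurable.const_mul
    exact (Real.measurable_exp.comp (((measurable_id.sub_const c).abs.const_mul
      (-ε)).div_const Δ))
  -- rewrite both measures as withDensity over the product Lebesgue measure
  have hrw : ∀ c : Fin z → ℝ, μ c =
      (Measure.pi fun _ : Fin z => (volume : Measure ℝ)).withDensity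
        (fun x => ∏ i, ENNReal.ofReal
          ((ε / (2 * Δ)) * Real.exp (-ε * |x i - c i| / Δ))) := by
    intro c
    rw [hμ c, pi_withDensity _ _ (fun i => hmeas (c i))]
  rw [hrw a, hrw b,
    withDensity_apply _ hS, withDensity_apply _ hS]
  rw [← lintegral_const_mul' _ _ (by simp)]
  apply lintegral_mono
  intro x
  dsimp only
  -- pointwise density inequality
  have hc : (0:ℝ) < ε / (2 * Δ) := by positivity
  have hprod : ∀ c : Fin z → ℝ,
      ∏ i, ENNReal.ofReal ((ε / (2 * Δ)) * Real.exp (-ε * |x i - c i| / Δ)) =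
        ENNReal.ofReal (∏ i, (ε / (2 * Δ)) * Real.exp (-ε * |x i - c i| / Δ)) := by
    intro c
    rw [← ENNReal.ofReal_prod_of_nonneg]
    intro i _
    positivity
  rw [hprod a, hprod b, ← ENNReal.ofReal_mul (Real.exp_nonneg ε)]
  apply ENNReal.ofReal_le_ofReal
  -- real inequality
  have hfact : ∀ c : Fin z → ℝ,
      ∏ i, (ε / (2 * Δ)) * Real.exp (-ε * |x i - c i| / Δ) =
        (ε / (2 * Δ)) ^ z * Real.exp (∑ i, -ε * |x i - c i| / Δ) := by
    intro c
    rw [Finset.prod_mul_distrib, Finset.prod_const, Real.exp_sum]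
    simp
  rw [hfact a, hfact b]
  rw [mul_comm (Real.exp ε), mul_assoc, ← Real.exp_add]
  apply mul_le_mul_of_nonneg_left _ (by positivity)
  apply Real.exp_le_exp.mpr
  have hsum : ∑ i, -ε * |x i - a i| / Δ - ∑ i, -ε * |x i - b i| / Δ ≤ ε := by
    rw [← Finset.sum_sub_distrib]
    have hterm : ∀ i : Fin z, -ε * |x i - a i| / Δ - -ε * |x i - b i| / Δ ≤
        ε * |a i - b i| / Δ := by
      intro i
      have h1 : |x i - b i| - |x i - a i| ≤ |a i - b i| := by
        have := abs_sub_abs_le_abs_sub (x i - b i) (x i - a i)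
        have h2 : (x i - b i) - (x i - a i) = a i - b i := by ring
        rw [h2] at this
        linarith
      have h3 : -ε * |x i - a i| / Δ - -ε * |x i - b i| / Δ =
          ε * (|x i - b i| - |x i - a i|) / Δ := by ring
      rw [h3]
      gcongr
    calc ∑ i, (-ε * |x i - a i| / Δ - -ε * |x i - b i| / Δ)
        ≤ ∑ i, ε * |a i - b i| / Δ := Finset.sum_le_sum fun i _ => hterm i
      _ = (ε / Δ) * ∑ i, |a i - b i| := by
          rw [Finset.mul_sum]; exact Finset.sum_congr rfl fun i _ => by ring
      _ ≤ (ε / Δ) * Δ := by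
          apply mul_le_mul_of_nonneg_left hab (by positivity)
      _ = ε := by field_simp
  linarith
end

section
/- Let m ≥ 1, let l₁, …, l_m ∈ ℝ be fixed logits, and let a ∈ ℝ be any constant. Then the function T ↦ | a − max_i exp(l_i / T) / ∑_{j=1}^m exp(l_j / T) | is quasiconvex on (0, ∞): for all 0 < T₁ ≤ T₂ ≤ T₃, its value at T₂ is at most the maximum of its values at T₁ and T₃. -/
open Real

lemma abs_between_aux (a b x c : ℝ) (h1 : b ≤ x) (h2 : x ≤ c) :
    |a - x| ≤ max |a - b| |a - c| := by
  rcases le_total a x with h | h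
  · have : |a - x| = x - a := by rw [abs_sub_comm]; exact abs_of_nonneg (by linarith)
    have hc : x - a ≤ |a - c| := by
      rw [abs_sub_comm]
      calc x - a ≤ c - a := by linarith
        _ ≤ |c - a| := le_abs_self _
    rw [this]; exact le_max_of_le_right hc
  · have : |a - x| = a - x := abs_of_nonneg (by linarith)
    have hb : a - x ≤ |a - b| := by
      calc a - x ≤ a - b := by linarith
        _ ≤ |a - b| := le_abs_self _
    rw [this]; exact le_max_of_le_left hb

/-- For fixed real logits and any constant `a`, the function
`T ↦ |a − max_i exp(l i / T) / ∑ j exp(l j / T)|` is quasiconvex on `(0, ∞)`. -/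
theorem abs_acc_minus_confidence_quasiconvex_fixed_logits
    (m : ℕ) (hm : 1 ≤ m) (l : Fin m → ℝ) (a : ℝ) :
    ∀ T₁ T₂ T₃ : ℝ, 0 < T₁ → T₁ ≤ T₂ → T₂ ≤ T₃ →
      |a - ⨆ i : Fin m, Real.exp (l i / T₂) / ∑ j : Fin m, Real.exp (l j / T₂)| ≤
        max |a - ⨆ i : Fin m, Real.exp (l i / T₁) / ∑ j : Fin m, Real.exp (l j / T₁)|
            |a - ⨆ i : Fin m, Real.exp (l i / T₃) / ∑ j : Fin m, Real.exp (l j / T₃)| := by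
  intro T₁ T₂ T₃ h1 h12 h23
  have hne : Nonempty (Fin m) := ⟨⟨0, hm⟩⟩
  obtain ⟨i₀, hi₀⟩ := Finite.exists_max l
  have hS : ∀ T : ℝ, 0 < ∑ j : Fin m, Real.exp (l j / T) := fun T =>
    Finset.sum_pos (fun j _ => Real.exp_pos _) ⟨⟨0, hm⟩, Finset.mem_univ _⟩
  -- the sup equals value at i₀
  have hsup : ∀ T : ℝ, 0 < T →
      (⨆ i : Fin m, Real.exp (l i / T) / ∑ j : Fin m, Real.exp (l j / T)) =
        Real.exp (l i₀ / T) / ∑ j : Fin m, Real.exp (l j / T) := by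
    intro T hT
    apply le_antisymm
    · apply ciSup_le
      intro i
      gcongr
      exact hi₀ i
    · exact le_ciSup (Finite.bddAbove_range
        (fun i : Fin m => Real.exp (l i / T) / ∑ j : Fin m, Real.exp (l j / T))) i₀
  -- f is antitone
  have hf : ∀ Ta Tb : ℝ, 0 < Ta → Ta ≤ Tb →
      Real.exp (l i₀ / Tb) / ∑ j : Fin m, Real.exp (l j / Tb) ≤
        Real.exp (l i₀ / Ta) / ∑ j : Fin m, Real.exp (l j / Ta) := by
    intro Ta Tb hTa hab
    have hTb : 0 < Tb := lt_of_lt_of_le hTa hab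
    rw [div_le_div_iff₀ (hS Tb) (hS Ta), Finset.mul_sum, Finset.mul_sum]
    apply Finset.sum_le_sum
    intro j _
    rw [← Real.exp_add, ← Real.exp_add, Real.exp_le_exp]
    have hnum : 0 ≤ l i₀ - l j := sub_nonneg.mpr (hi₀ j)
    have : (l i₀ - l j) / Tb ≤ (l i₀ - l j) / Ta :=
      div_le_div_of_nonneg_left hnum hTa hab
    rw [sub_div, sub_div] at this
    linarith
  rw [hsup T₁ h1, hsup T₂ (h1.trans_le h12), hsup T₃ (h1.trans_le (h12.trans h23))]
  rw [max_comm]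
  exact abs_between_aux _ _ _ _
    (hf T₂ T₃ (h1.trans_le h12) h23) (hf T₁ T₂ h1 h12)
end

section
/- Let m ≥ 1, let X be a measurable space, let μ be a probability measure on X × Fin m, and let l : Fin m → X → ℝ be measurable logit functions. Assume that for every T > 0 the function (x, y) ↦ ( ∑_{j=1}^m l j x · exp(l j x / T) ) / ( ∑_{j=1}^m exp(l j x / T) ) is μ-integrable. Then the expected softmax-weighted average of the logits, T ↦ ∫ ( ∑_j l j x · exp(l j x / T) ) / ( ∑_j exp(l j x / T) ) dμ(x, y), is monotonically non-increasing (antitone) on (0, ∞). -/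
open MeasureTheory Real

private lemma softmax_mono (m : ℕ) (hm : 1 ≤ m) (a : Fin m → ℝ) {b c : ℝ} (hbc : b ≤ c) :
    (∑ j : Fin m, a j * Real.exp (a j * b)) / (∑ j : Fin m, Real.exp (a j * b)) ≤
    (∑ j : Fin m, a j * Real.exp (a j * c)) / (∑ j : Fin m, Real.exp (a j * c)) := by
  have hinh : Nonempty (Fin m) := ⟨⟨0, hm⟩⟩
  have hne : (Finset.univ : Finset (Fin m)).Nonempty := Finset.univ_nonempty
  have hb : 0 < ∑ j : Fin m, Real.exp (a j * b) :=
    Finset.sum_pos (fun j _ => Real.exp_pos _) hne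
  have hc : 0 < ∑ j : Fin m, Real.exp (a j * c) :=
    Finset.sum_pos (fun j _ => Real.exp_pos _) hne
  rw [div_le_div_iff₀ hb hc]
  set F : Fin m → Fin m → ℝ := fun i j =>
    a i * Real.exp (a i * c) * Real.exp (a j * b)
      - a i * Real.exp (a i * b) * Real.exp (a j * c) with hF
  have key : ∀ i j : Fin m, 0 ≤ F i j + F j i := by
    intro i j
    have heq : F i j + F j i =
        (a i - a j) * (Real.exp (a i * c) * Real.exp (a j * b)
          - Real.exp (a i * b) * Real.exp (a j * c)) := by
      simp only [hF]; ring
    rw [heq]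
    rcases le_total (a i) (a j) with h | h
    · have h1 : a i - a j ≤ 0 := by linarith
      have h2 : Real.exp (a i * c) * Real.exp (a j * b)
          - Real.exp (a i * b) * Real.exp (a j * c) ≤ 0 := by
        rw [← Real.exp_add, ← Real.exp_add, sub_nonpos, Real.exp_le_exp]
        nlinarith
      nlinarith [mul_nonneg (neg_nonneg.2 h1) (neg_nonneg.2 h2)]
    · apply mul_nonneg
      · linarith
      · rw [← Real.exp_add, ← Real.exp_add, sub_nonneg, Real.exp_le_exp]
        nlinarith
  have hsum : 0 ≤ ∑ i : Fin m, ∑ j : Fin m, F i j := by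
    have h2 : 0 ≤ ∑ i : Fin m, ∑ j : Fin m, (F i j + F j i) :=
      Finset.sum_nonneg fun i _ => Finset.sum_nonneg fun j _ => key i j
    have hcomm : ∑ i : Fin m, ∑ j : Fin m, F j i = ∑ i : Fin m, ∑ j : Fin m, F i j :=
      Finset.sum_comm
    have h3 : ∑ i : Fin m, ∑ j : Fin m, (F i j + F j i)
        = (∑ i : Fin m, ∑ j : Fin m, F i j) + (∑ i : Fin m, ∑ j : Fin m, F j i) := by
      simp [Finset.sum_add_distrib]
    rw [h3, hcomm] at h2
    linarith
  have hdiff : (∑ j : Fin m, a j * Real.exp (a j * c)) * (∑ j : Fin m, Real.exp (a j * b))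
      - (∑ j : Fin m, a j * Real.exp (a j * b)) * (∑ j : Fin m, Real.exp (a j * c))
      = ∑ i : Fin m, ∑ j : Fin m, F i j := by
    rw [Finset.sum_mul_sum, Finset.sum_mul_sum, ← Finset.sum_sub_distrib]
    refine Finset.sum_congr rfl fun i _ => ?_
    rw [← Finset.sum_sub_distrib]
  linarith [hdiff ▸ hsum]

/-- The expected softmax-weighted average of the logits is monotonically non-increasing
in the temperature `T` on `(0, ∞)`. -/
theorem expected_softmax_weighted_average_antitone
    {X : Type*} [MeasurableSpace X] (m : ℕ) (hm : 1 ≤ m)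
    (μ : Measure (X × Fin m)) [IsProbabilityMeasure μ]
    (l : Fin m → X → ℝ) (hl : ∀ i, Measurable (l i))
    (hint : ∀ T : ℝ, 0 < T →
      Integrable (fun p : X × Fin m =>
        (∑ j : Fin m, l j p.1 * Real.exp (l j p.1 / T)) /
          (∑ j : Fin m, Real.exp (l j p.1 / T))) μ) :
    ∀ T₁ T₂ : ℝ, 0 < T₁ → T₁ ≤ T₂ →
      (∫ p : X × Fin m,
        (∑ j : Fin m, l j p.1 * Real.exp (l j p.1 / T₂)) /
          (∑ j : Fin m, Real.exp (l j p.1 / T₂)) ∂μ) ≤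
        (∫ p : X × Fin m,
          (∑ j : Fin m, l j p.1 * Real.exp (l j p.1 / T₁)) /
            (∑ j : Fin m, Real.exp (l j p.1 / T₁)) ∂μ) := by
  intro T₁ T₂ hT₁ hle
  have hT₂ : 0 < T₂ := lt_of_lt_of_le hT₁ hle
  refine integral_mono (hint T₂ hT₂) (hint T₁ hT₁) fun p => ?_
  have hinv : T₂⁻¹ ≤ T₁⁻¹ := by
    exact inv_anti₀ hT₁ hle
  simpa [div_eq_mul_inv] using softmax_mono m hm (fun j => l j p.1) hinv
end
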